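/- arXiv:1904.05752 — 3 statements merged into one kernel-verified Lean document; each statement's English description precedes it below -/
import Mathlib

section
/- Matrix mutation preserves skew-symmetrizability with the same symmetrizer: if B is skew-symmetrizable with symmetrizer D (BD skew-symmetric), then for any index k the mutated matrix μ_k(B), defined by μ_k(B)_{ij} = −b_{ij} if i = k or j = k, and μ_k(B)_{ij} = b_{ij} + sgn(b_{ik}) max(b_{ik} b_{kj}, 0) otherwise, is again skew-symmetrizable with symmetrizer D. -/
/-- Matrix mutation of a square matrix at index `k`:
entries in row `k` or column `k` are negated, and every other entry `b i j` is
replaced by `b i j + sgn (b i k) * max (b i k * b k j) 0`. -/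
def mutate {n : ℕ} (B : Matrix (Fin n) (Fin n) ℤ) (k : Fin n) :
    Matrix (Fin n) (Fin n) ℤ :=
  fun i j =>
    if i = k ∨ j = k then - B i j
    else B i j + Int.sign (B i k) * max (B i k * B k j) 0

lemma sgnmax (a c : ℤ) : Int.sign a * max (a * c) 0 = Int.sign c * max (a * c) 0 := by
  rcases le_or_gt (a * c) 0 with h | h
  · simp [max_eq_right h]
  · have ha : a ≠ 0 := by rintro rfl; simp at h
    have hc : c ≠ 0 := by rintro rfl; simp at h
    rcases lt_or_gt_of_ne ha with ha' | ha'
    · have hc' : c < 0 := by nlinarith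
      rw [Int.sign_eq_neg_one_of_neg ha', Int.sign_eq_neg_one_of_neg hc']
    · have hc' : 0 < c := by nlinarith
      rw [Int.sign_eq_one_of_pos ha', Int.sign_eq_one_of_pos hc']

/-- mutation preserves skew-symmetrizability with the same
symmetrizer: if `B D` is skew-symmetric with `d i > 0`, then so is `μ_k(B) D`. -/
theorem stmt7 {n : ℕ} (B : Matrix (Fin n) (Fin n) ℤ) (d : Fin n → ℤ)
    (hd : ∀ i, 0 < d i)
    (hskew : ∀ i j, B i j * d j = - (B j i * d i))
    (k : Fin n) :
    ∀ i j, mutate B k i j * d j = - (mutate B k j i * d i) := by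
  intro i j
  simp only [mutate]
  by_cases hik : i = k
  · subst hik
    simp only [true_or, or_true, if_pos]
    linarith [hskew i j]
  · by_cases hjk : j = k
    · subst hjk
      simp only [true_or, or_true, if_pos]
      linarith [hskew i j]
    · rw [if_neg (by tauto), if_neg (by tauto)]
      have hdk := hd k
      have hdi := hd i
      have hdj := hd j
      have hs1 : B j k * d k = -(B k j * d j) := hskew j k
      have hs2 : B k i * d i = -(B i k * d k) := hskew k i
      have hsign : Int.sign (B j k) = - Int.sign (B k j) := by
        have h1 : Int.sign (B j k * d k) = Int.sign (-(B k j * d j)) := by rw [hs1]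
        rw [Int.sign_neg, Int.sign_mul, Int.sign_mul,
          Int.sign_eq_one_of_pos hdk, Int.sign_eq_one_of_pos hdj] at h1
        simpa using h1
      have hmax : max (B j k * B k i) 0 * (d i * d k) = max (B i k * B k j) 0 * (d j * d k) := by
        have hp1 : (0:ℤ) ≤ d i * d k := by positivity
        have hp2 : (0:ℤ) ≤ d j * d k := by positivity
        rw [max_mul_of_nonneg _ _ hp1, max_mul_of_nonneg _ _ hp2, zero_mul, zero_mul]
        congr 1
        linear_combination (B k i * d i) * hs1 - (B k j * d j) * hs2
      have hsm := sgnmax (B i k) (B k j)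
      have key : Int.sign (B i k) * max (B i k * B k j) 0 * d j
          = -(Int.sign (B j k) * max (B j k * B k i) 0 * d i) := by
        have hkey : (Int.sign (B i k) * max (B i k * B k j) 0 * d j) * d k
            = (-(Int.sign (B j k) * max (B j k * B k i) 0 * d i)) * d k := by
          linear_combination (d j * d k) * hsm
            + (max (B j k * B k i) 0 * d i * d k) * hsign
            - Int.sign (B k j) * hmax
        exact mul_right_cancel₀ (ne_of_gt hdk) hkey
      linear_combination hskew i j + key
end

section
/- Let 𝒲 be the universal Coxeter group of rank n, the free product of n copies of ℤ/2ℤ with generators t_1,…,t_n. An element of 𝒲 represented by a reduced word i_1 i_2 ⋯ i_k is a reflection (conjugate of some generator) if and only if k is odd and i_j = i_{k+1−j} for all j = 1,…,k (i.e. the reduced word is a palindrome of odd length). -/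
/-- The universal Coxeter group of rank `n`: the group presented by generators
`t_1, …, t_n` and relations `t_i² = 1` (the free product of `n` copies of ℤ/2ℤ). -/
def UnivCoxeter (n : ℕ) : Type :=
  PresentedGroup (Set.range fun i : Fin n => (FreeGroup.of i) ^ 2)

instance (n : ℕ) : Group (UnivCoxeter n) := by
  unfold UnivCoxeter; infer_instance

/-- The generator `t_i` of the universal Coxeter group. -/
def tgen {n : ℕ} (i : Fin n) : UnivCoxeter n :=
  PresentedGroup.of i

/-- An element of the universal Coxeter group is a reflection if it is a
conjugate of some generator. -/
def IsReflection {n : ℕ} (x : UnivCoxeter n) : Prop :=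
  ∃ (w : UnivCoxeter n) (i : Fin n), x = w * tgen i * w⁻¹

/-!
The group acts on reduced words by prepending a letter and cancelling it against an equal first
letter. Evaluating this action at the empty word shows that every element is the product of a
unique reduced word. A conjugate `w t_i w⁻¹` with `w = t_{u_1} ⋯ t_{u_m}` reduced is already
reduced as the word `u i u⁻¹` unless `u` ends in `i`; in that case `t_i t_i t_i = t_i` lets us
drop the last letter of `u`, after which the word is reduced. So the reduced words of
reflections are exactly the words `v i v⁻¹`, that is, the palindromes of odd length.
-/

theorem List.odd_length_and_reverse_eq_iff {α : Type*} {l : List α} :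
    Odd l.length ∧ l.reverse = l ↔ ∃ v a, l = v ++ a :: v.reverse := by
  constructor
  · rintro ⟨hodd, hrev⟩
    induction List.Palindrome.iff_reverse_eq.mpr hrev with
    | nil => simp at hodd
    | singleton a => exact ⟨[], a, rfl⟩
    | cons_concat x hl ih =>
      obtain ⟨v, a, rfl⟩ := ih (by simpa [Nat.odd_add] using hodd)
        (List.Palindrome.iff_reverse_eq.mp hl)
      exact ⟨x :: v, a, by simp⟩
  · rintro ⟨v, a, rfl⟩
    exact ⟨⟨v.length, by simp; omega⟩, by simp⟩

theorem List.isChain_ne_append_cons_reverse {α : Type*} {v : List α} {a : α}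
    (hv : v.IsChain (· ≠ ·)) (hlast : v.getLast? ≠ some a) :
    (v ++ a :: v.reverse).IsChain (· ≠ ·) := by
  refine hv.append (List.isChain_cons.mpr ⟨?_, ?_⟩) ?_
  · intro y hy hay
    exact hlast (by rwa [List.head?_reverse, ← hay] at hy)
  · exact List.isChain_reverse.mpr (hv.imp fun _ _ h => h.symm)
  · rintro x hx y ⟨⟩ rfl
    exact hlast hx

namespace UnivCoxeter

variable {n : ℕ}

theorem tgen_mul_self (i : Fin n) : tgen i * tgen i = 1 := by
  rw [← pow_two]
  exact PresentedGroup.one_of_mem ⟨i, rfl⟩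

theorem tgen_inv (i : Fin n) : (tgen i)⁻¹ = tgen i :=
  inv_eq_of_mul_eq_one_right (tgen_mul_self i)

theorem prod_reverse_map_tgen (u : List (Fin n)) :
    (u.map tgen).reverse.prod = (u.map tgen).prod⁻¹ := by
  simp [List.prod_inv_reverse, Function.comp_def, tgen_inv]

theorem closure_range_tgen : Subgroup.closure (Set.range (tgen (n := n))) = ⊤ :=
  PresentedGroup.closure_range_of _

theorem prod_append_cons_reverse (v : List (Fin n)) (i : Fin n) :
    ((v ++ i :: v.reverse).map tgen).prod =
      (v.map tgen).prod * tgen i * (v.map tgen).prod⁻¹ := by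
  simp [prod_reverse_map_tgen, mul_assoc]

abbrev ReducedWord (n : ℕ) : Type := {l : List (Fin n) // l.IsChain (· ≠ ·)}

namespace ReducedWord

def prepend (i : Fin n) (l : ReducedWord n) : ReducedWord n :=
  if h : l.1.head? = some i then ⟨l.1.tail, l.2.tail⟩
  else ⟨i :: l.1, List.isChain_cons.mpr ⟨fun _ hy hiy => h (hiy ▸ hy), l.2⟩⟩

theorem prepend_involutive (i : Fin n) : Function.Involutive (prepend i) := by
  rintro ⟨_ | ⟨a, t⟩, hl⟩
  · simp [prepend]
  · by_cases hai : a = i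
    · subst hai
      have hhead : t.head? ≠ some a := fun h => (List.isChain_cons.mp hl).1 a h rfl
      simp [prepend, hhead]
    · simp [prepend, hai]

theorem prod_prepend (i : Fin n) (l : ReducedWord n) :
    ((prepend i l).1.map tgen).prod = tgen i * (l.1.map tgen).prod := by
  obtain ⟨_ | ⟨a, t⟩, hl⟩ := l
  · simp [prepend]
  · by_cases hai : a = i
    · subst hai
      simp [prepend, ← mul_assoc, tgen_mul_self]
    · simp [prepend, hai]

def action : UnivCoxeter n →* Equiv.Perm (ReducedWord n) :=
  PresentedGroup.toGroup (f := fun i => (prepend_involutive i).toPerm) <| by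
    rintro _ ⟨i, rfl⟩
    ext1 l
    simp [pow_two, prepend_involutive i l]

theorem action_tgen (i : Fin n) : action (tgen i) = (prepend_involutive i).toPerm :=
  PresentedGroup.toGroup.of _

theorem prod_action_apply (w : UnivCoxeter n) (l : ReducedWord n) :
    ((action w l).1.map tgen).prod = w * (l.1.map tgen).prod := by
  have hw : w ∈ Subgroup.closure (Set.range tgen) := closure_range_tgen ▸ Subgroup.mem_top w
  induction hw using Subgroup.closure_induction_left generalizing l with
  | one => simp
  | mul_left _ hx y _ ih =>
    obtain ⟨i, rfl⟩ := hx
    simp [action_tgen, prod_prepend, ih, mul_assoc]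
  | inv_mul_cancel _ hx y _ ih =>
    obtain ⟨i, rfl⟩ := hx
    simp [tgen_inv, action_tgen, prod_prepend, ih, mul_assoc]

theorem action_prod_nil (l : ReducedWord n) :
    action (l.1.map tgen).prod ⟨[], List.isChain_nil⟩ = l := by
  obtain ⟨l, hl⟩ := l
  induction l with
  | nil => simp
  | cons i t ih =>
    have hhead : t.head? ≠ some i := fun h => (List.isChain_cons.mp hl).1 i h rfl
    simp [action_tgen, ih hl.tail, prepend, hhead]

theorem exists_prod_eq (w : UnivCoxeter n) : ∃ l : ReducedWord n, (l.1.map tgen).prod = w :=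
  ⟨action w ⟨[], List.isChain_nil⟩, by simp [prod_action_apply]⟩

theorem eq_of_prod_eq {l m : ReducedWord n}
    (h : (l.1.map tgen).prod = (m.1.map tgen).prod) : l = m := by
  rw [← action_prod_nil l, ← action_prod_nil m, h]

end ReducedWord

theorem exists_conj_tgen_eq_prod (w : UnivCoxeter n) (i : Fin n) :
    ∃ v : List (Fin n), (v ++ i :: v.reverse).IsChain (· ≠ ·) ∧
      w * tgen i * w⁻¹ = ((v ++ i :: v.reverse).map tgen).prod := by
  obtain ⟨⟨u, hu⟩, rfl⟩ := ReducedWord.exists_prod_eq w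
  by_cases hlast : u.getLast? = some i
  · obtain ⟨v, rfl⟩ : ∃ v, u = v ++ [i] := List.getLast?_eq_some_iff.mp hlast
    have hv := (List.isChain_append.mp hu).1
    have hvlast : v.getLast? ≠ some i := fun h =>
      (List.isChain_append.mp hu).2.2 i h i rfl rfl
    refine ⟨v, List.isChain_ne_append_cons_reverse hv hvlast, ?_⟩
    rw [prod_append_cons_reverse]
    simp [mul_assoc, tgen_inv, tgen_mul_self]
  · exact ⟨u, List.isChain_ne_append_cons_reverse hu hlast, (prod_append_cons_reverse u i).symm⟩

end UnivCoxeter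

open UnivCoxeter in
/-- an element of the universal Coxeter group of rank `n`
represented by a reduced word `i_1 i_2 ⋯ i_k` (no two equal consecutive letters)
is a reflection if and only if `k` is odd and `i_j = i_{k+1−j}` for all `j`,
i.e. the reduced word is a palindrome of odd length. -/
theorem stmt12 {n : ℕ} (l : List (Fin n)) (hred : l.Chain' (· ≠ ·)) :
    IsReflection ((l.map tgen).prod) ↔ Odd l.length ∧ l.reverse = l := by
  rw [List.odd_length_and_reverse_eq_iff]
  constructor
  · rintro ⟨w, i, hconj⟩
    obtain ⟨v, hv, hprod⟩ := exists_conj_tgen_eq_prod w i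
    have hlv : (⟨l, hred⟩ : ReducedWord n) = ⟨_, hv⟩ :=
      ReducedWord.eq_of_prod_eq (hconj.trans hprod)
    exact ⟨v, i, congrArg Subtype.val hlv⟩
  · rintro ⟨v, a, rfl⟩
    exact ⟨_, a, prod_append_cons_reverse v a⟩
end

section
/- Let G be a finite directed graph in which every chordless cycle is non-oriented (i.e., its arrows do not all point in a consistent cyclic direction). Then G is acyclic. -/
/-- A chordless cycle in a directed graph `E` on `V`, recorded as the list
`c = [i_1, …, i_{d-1}]` of its (distinct) vertices: there is an edge (in either
direction) between two distinct vertices of `c` exactly when they are cyclically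
consecutive. -/
def IsChordlessCycle {V : Type*} (E : V → V → Prop) (c : List V) : Prop :=
  3 ≤ c.length ∧ c.Nodup ∧
  ∀ j k : Fin c.length, j ≠ k →
    ((E (c.get j) (c.get k) ∨ E (c.get k) (c.get j)) ↔
      ((j : ℕ) + 1 = k ∨ (k : ℕ) + 1 = j ∨
        ((j : ℕ) = 0 ∧ (k : ℕ) = c.length - 1) ∨
        ((k : ℕ) = 0 ∧ (j : ℕ) = c.length - 1)))

/-- A cycle (list of vertices) is oriented if all its arrows point consistently
in one cyclic direction. -/
def IsOrientedCycle {V : Type*} (E : V → V → Prop) (c : List V) : Prop :=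
  (c.Chain' E ∧ ∀ h : c ≠ [], E (c.getLast h) (c.head h)) ∨
  (c.Chain' (flip E) ∧ ∀ h : c ≠ [], (flip E) (c.getLast h) (c.head h))

/-- A directed cycle: a nonempty directed closed walk from some vertex to itself. -/
def HasDirectedCycle {V : Type*} (E : V → V → Prop) : Prop :=
  ∃ (v : V) (p : List V), p ≠ [] ∧ List.Chain E v p ∧ p.getLast? = some v


/-!
A shortest directed cycle is chordless: a chord, in either direction, together with one of the
two arcs of the cycle it joins closes up a strictly shorter directed cycle. Having no loops or
2-cycles, it has at least three vertices, and it is oriented, contradicting the hypothesis.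
-/

section ClosedWalk

variable {V : Type*} {E : V → V → Prop}

/-- A closed directed walk of length `n`, as an `n`-periodic sequence of vertices: this turns
cyclic index arithmetic into plain arithmetic on `ℕ`. -/
structure IsClosedWalk (E : V → V → Prop) (f : ℕ → V) (n : ℕ) : Prop where
  pos : 0 < n
  adj : ∀ i, E (f i) (f (i + 1))
  periodic : Function.Periodic f n

lemma isClosedWalk_of_back_edge {f : ℕ → V} {m : ℕ} (hpath : ∀ i < m, E (f i) (f (i + 1)))
    (hback : E (f m) (f 0)) : IsClosedWalk E (fun i => f (i % (m + 1))) (m + 1) where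
  pos := m.succ_pos
  adj i := by
    have hr : i % (m + 1) < m + 1 := Nat.mod_lt _ m.succ_pos
    rcases Nat.lt_or_ge (i % (m + 1)) m with hlt | hge
    · have hsucc : (i + 1) % (m + 1) = i % (m + 1) + 1 := by
        rw [Nat.add_mod, Nat.mod_eq_of_lt (a := 1) (by omega), Nat.mod_eq_of_lt (by omega)]
      simpa only [hsucc] using hpath _ hlt
    · have heq : i % (m + 1) = m := by omega
      simpa only [Nat.succ_mod_succ_eq_zero_iff.mpr heq, heq] using hback
  periodic i := by simp

lemma HasDirectedCycle.exists_isClosedWalk (h : HasDirectedCycle E) :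
    ∃ n f, IsClosedWalk E f n := by
  obtain ⟨v, p, hp, hchain, hlast⟩ := h
  have hpath : ∀ i < p.length, E ((v :: p).getD i v) ((v :: p).getD (i + 1) v) := by
    intro i hi
    rw [List.getD_eq_getElem _ _ (by simp; omega), List.getD_eq_getElem _ _ (by simp; omega)]
    exact List.isChain_iff_getElem.mp hchain i (by simp; omega)
  have hclose : (v :: p).getD p.length v = v := by
    rw [List.getLast?_eq_some_getLast hp, Option.some_inj, ← List.getLast_cons (a := v) hp,
      List.getLast_eq_getElem] at hlast
    rw [List.getD_eq_getElem _ _ (by simp)]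
    simpa using hlast
  have hlen : p.length - 1 + 1 = p.length := Nat.sub_add_cancel (List.length_pos_of_ne_nil hp)
  refine ⟨_, _,
    isClosedWalk_of_back_edge (m := p.length - 1) (fun i hi => hpath i (by omega)) ?_⟩
  have hlast_edge := hpath (p.length - 1) (by omega)
  rwa [hlen, hclose] at hlast_edge

namespace IsClosedWalk

variable {f : ℕ → V} {n : ℕ}

lemma adj_last (hf : IsClosedWalk E f n) : E (f (n - 1)) (f 0) := by
  simpa [Nat.sub_add_cancel hf.pos, ← hf.periodic 0] using hf.adj (n - 1)

lemma shortcut (hf : IsClosedWalk E f n) {b m : ℕ} (h : E (f (b + m)) (f b)) :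
    IsClosedWalk E (fun i => f (b + i % (m + 1))) (m + 1) :=
  isClosedWalk_of_back_edge (f := fun i => f (b + i)) (fun i _ => hf.adj (b + i)) h

lemma three_le (hf : IsClosedWalk E f n) (hirr : ∀ v, ¬ E v v)
    (hasym : ∀ a b, E a b → ¬ E b a) : 3 ≤ n := by
  by_contra! hn
  obtain rfl | rfl : n = 1 ∨ n = 2 := by have := hf.pos; omega
  · exact hirr (f 0) (by simpa [hf.periodic 0] using hf.adj 0)
  · exact hasym _ _ (hf.adj 0) (by simpa [hf.periodic 0] using hf.adj 1)

lemma isOrientedCycle (hf : IsClosedWalk E f n) :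
    IsOrientedCycle E (List.ofFn fun i : Fin n => f i) :=
  Or.inl ⟨List.isChain_ofFn.mpr fun i _ => hf.adj i,
    fun _ => by simpa [List.getLast_ofFn, List.head_ofFn] using hf.adj_last⟩

lemma consecutive_of_edge_of_minimal (hf : IsClosedWalk E f n)
    (hmin : ∀ g m, IsClosedWalk E g m → n ≤ m) {j k : ℕ} (hj : j < n) (hk : k < n)
    (h : E (f j) (f k)) : k = j + 1 ∨ (k = 0 ∧ j = n - 1) := by
  rcases le_or_gt k j with hkj | hjk
  · have := hmin _ _ (hf.shortcut (b := k) (m := j - k) (by rwa [Nat.add_sub_cancel' hkj]))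
    omega
  · -- a forward chord closes up with the arc running from `k` on to `j + n`
    have h' : E (f (k + (j + n - k))) (f k) := by
      rwa [Nat.add_sub_cancel' (by omega), hf.periodic]
    have := hmin _ _ (hf.shortcut h')
    omega

lemma nodup_of_minimal (hf : IsClosedWalk E f n) (hmin : ∀ g m, IsClosedWalk E g m → n ≤ m) :
    (List.ofFn fun i : Fin n => f i).Nodup := by
  have key : ∀ i j : ℕ, i < j → j < n → f i ≠ f j := by
    intro i j hij hj he
    have h : E (f (j - 1)) (f i) := by
      simpa [he, Nat.sub_add_cancel (by omega : 1 ≤ j)] using hf.adj (j - 1)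
    have := hf.consecutive_of_edge_of_minimal hmin (by omega) (by omega) h
    omega
  rw [List.nodup_ofFn]
  intro i j hij
  rcases lt_trichotomy i j with h | h | h
  · exact absurd hij (key _ _ h j.2)
  · exact h
  · exact absurd hij.symm (key _ _ h i.2)

lemma isChordlessCycle_of_minimal (hf : IsClosedWalk E f n)
    (hmin : ∀ g m, IsClosedWalk E g m → n ≤ m) (hirr : ∀ v, ¬ E v v)
    (hasym : ∀ a b, E a b → ¬ E b a) :
    IsChordlessCycle E (List.ofFn fun i : Fin n => f i) := by
  refine ⟨by simpa using hf.three_le hirr hasym, hf.nodup_of_minimal hmin, ?_⟩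
  simp only [List.length_ofFn, List.get_ofFn, Fin.val_cast]
  intro j k hjk
  have hjk' : (j : ℕ) ≠ k := Fin.val_ne_of_ne hjk
  have hj : (j : ℕ) < n := by simpa using j.2
  have hk : (k : ℕ) < n := by simpa using k.2
  constructor
  · rintro (h | h)
    · have := hf.consecutive_of_edge_of_minimal hmin hj hk h
      omega
    · have := hf.consecutive_of_edge_of_minimal hmin hk hj h
      omega
  · rintro (h | h | ⟨hj, hk⟩ | ⟨hk, hj⟩)
    · exact Or.inl (h ▸ hf.adj j)
    · exact Or.inr (h ▸ hf.adj k)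
    · exact Or.inr (hj ▸ hk ▸ hf.adj_last)
    · exact Or.inl (hj ▸ hk ▸ hf.adj_last)

end IsClosedWalk

end ClosedWalk

theorem stmt13_general {V : Type*} (E : V → V → Prop)
    (hirr : ∀ v, ¬ E v v)
    (hasym : ∀ a b, E a b → ¬ E b a)
    (hchordless : ∀ c : List V, IsChordlessCycle E c → ¬ IsOrientedCycle E c) :
    ¬ HasDirectedCycle E := by
  intro hcyc
  classical
  have hex := hcyc.exists_isClosedWalk
  obtain ⟨f, hf⟩ := Nat.find_spec hex
  have hmin : ∀ g m, IsClosedWalk E g m → Nat.find hex ≤ m :=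
    fun g m hg => Nat.find_min' hex ⟨g, hg⟩
  exact hchordless _ (hf.isChordlessCycle_of_minimal hmin hirr hasym) hf.isOrientedCycle

/-- a finite directed graph (without loops or 2-cycles) in which
every chordless cycle is non-oriented is acyclic. -/
theorem stmt13 {V : Type*} [Fintype V] (E : V → V → Prop)
    (hirr : ∀ v, ¬ E v v)
    (hasym : ∀ a b, E a b → ¬ E b a)
    (hchordless : ∀ c : List V, IsChordlessCycle E c → ¬ IsOrientedCycle E c) :
    ¬ HasDirectedCycle E :=
  stmt13_general E hirr hasym hchordless
end
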